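/- Let G be a finite connected bipartite simple graph with bipartition (X, Y) and at least one edge, and let f be a like-geometric product set-labeling of G with common characteristic index k such that for every edge uv with u ∈ X and v ∈ Y one has r_v = r_u^k (i.e., X is the side of smaller common ratios). Then f is a strong product set-labeling (|f(u)∗f(v)| = |f(u)|·|f(v)| for every edge uv) if and only if |f(u)| = k for every vertex u ∈ X, i.e., all vertices in the partition X have the same label size, equal to the characteristic index. -/

import Mathlib

/-!
Over an edge `uv` with `u ∈ X`, write `f u = {a rⁱ : i < m}` and `f v = {b r^{kj} : j < n}`.
Then `f u * f v = {ab rᵉ : e ∈ E}` with `E = {i + kj : i < m, j < n}`.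
If this product is a geometric progression of `mn` terms, its two smallest elements `ab` and
`ab r` pin down its first term and ratio, so `E = {0, …, mn - 1}`; comparing the largest
elements `m - 1 + k(n - 1)` and `mn - 1` gives `m = k`. Conversely, for `m = k` the set `E`
consists of the two-digit numbers in base `k`, that is `E = {0, …, kn - 1}`, and the product
has `kn` elements.
-/

open Pointwise

/-- A finite set of positive integers is a geometric progression (with integer first term
`a > 0` and integer common ratio `r ≥ 2`). -/
def IsGeomProg (A : Finset ℕ) : Prop :=
  ∃ a r : ℕ, 0 < a ∧ 2 ≤ r ∧ A = (Finset.range A.card).image (fun i => a * r ^ i)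

open Finset

def geomProg (a r n : ℕ) : Finset ℕ := (range n).image fun i => a * r ^ i

def exponentSet (k m n : ℕ) : Finset ℕ := (range m ×ˢ range n).image fun p => p.1 + k * p.2

lemma strictMono_mul_pow {c r : ℕ} (hc : 0 < c) (hr : 2 ≤ r) :
    StrictMono fun e => c * r ^ e :=
  (pow_right_strictMono₀ (by omega : 1 < r)).const_mul hc

lemma card_geomProg {a r : ℕ} (ha : 0 < a) (hr : 2 ≤ r) (n : ℕ) :
    (geomProg a r n).card = n := by
  rw [geomProg, card_image_of_injective _ (strictMono_mul_pow ha hr).injective, card_range]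

lemma geomProg_mul_geomProg_pow (a b r k m n : ℕ) :
    geomProg a r m * geomProg b (r ^ k) n = (exponentSet k m n).image fun e => a * b * r ^ e := by
  ext x
  simp only [geomProg, exponentSet, mem_mul, mem_image, mem_range, mem_product]
  constructor
  · rintro ⟨_, ⟨i, hi, rfl⟩, _, ⟨j, hj, rfl⟩, rfl⟩
    exact ⟨i + k * j, ⟨(i, j), ⟨hi, hj⟩, rfl⟩, by rw [pow_add, pow_mul]; ring⟩
  · rintro ⟨_, ⟨⟨i, j⟩, ⟨hi, hj⟩, rfl⟩, rfl⟩
    exact ⟨a * r ^ i, ⟨i, hi, rfl⟩, b * (r ^ k) ^ j, ⟨j, hj, rfl⟩, by rw [pow_add, pow_mul]; ring⟩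

lemma exponentSet_self {k : ℕ} (hk : 0 < k) (n : ℕ) : exponentSet k k n = range (k * n) := by
  ext e
  simp only [exponentSet, mem_image, mem_product, mem_range, Prod.exists]
  constructor
  · rintro ⟨i, j, ⟨hi, hj⟩, rfl⟩
    calc i + k * j < k * (j + 1) := by rw [mul_add, mul_one]; omega
      _ ≤ k * n := Nat.mul_le_mul_left k hj
  · intro he
    exact ⟨e % k, e / k, ⟨Nat.mod_lt e hk, (Nat.div_lt_iff_lt_mul hk).2 (by rwa [mul_comm])⟩,
      Nat.mod_add_div e k⟩

lemma eq_of_exponentSet_eq_range {k m n : ℕ} (hm : 0 < m) (hn : 2 ≤ n)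
    (h : exponentSet k m n = range (m * n)) : m = k := by
  obtain ⟨m, rfl⟩ : ∃ m', m = m' + 1 := ⟨m - 1, by omega⟩
  obtain ⟨n, rfl⟩ : ∃ n', n = n' + 1 := ⟨n - 1, by omega⟩
  have hmax : m + k * n < (m + 1) * (n + 1) := by
    rw [← mem_range, ← h]
    exact mem_image.2 ⟨(m, n), mem_product.2 ⟨self_mem_range_succ m, self_mem_range_succ n⟩, rfl⟩
  have hmax' : (m + 1) * (n + 1) - 1 ∈ exponentSet k (m + 1) (n + 1) := by
    rw [h, mem_range]; exact Nat.sub_lt (by positivity) one_pos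
  obtain ⟨⟨i, j⟩, hij, he⟩ := mem_image.1 hmax'
  have he : i + k * j = (m + 1) * (n + 1) - 1 := he
  simp only [mem_product, mem_range] at hij
  have hkj : k * j ≤ k * n := Nat.mul_le_mul_left k (by omega)
  have hsplit : (m + 1) * (n + 1) = (m + 1) * n + m + 1 := by ring
  apply le_antisymm
  · exact Nat.le_of_mul_le_mul_right (c := n) (by omega) (by omega)
  · exact Nat.le_of_mul_le_mul_right (c := n) (by omega) (by omega)

lemma eq_range_of_image_eq_geomProg {E : Finset ℕ} {c r a r' N : ℕ} (hc : 0 < c) (hr : 2 ≤ r)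
    (h0 : 0 ∈ E) (h1 : 1 ∈ E) (hN : 2 ≤ N)
    (h : E.image (fun e => c * r ^ e) = geomProg a r' N) : E = range N := by
  have mem : ∀ l < N, ∃ e ∈ E, c * r ^ e = a * r' ^ l := fun l hl =>
    mem_image.1 (h ▸ mem_image_of_mem _ (mem_range.2 hl))
  have mem' : ∀ e ∈ E, ∃ l < N, a * r' ^ l = c * r ^ e := fun e he => by
    have := mem_image_of_mem (fun e => c * r ^ e) he
    rw [h] at this
    simpa [geomProg] using this
  have ha : a = c := by
    obtain ⟨e₀, -, he₀⟩ := mem 0 (by omega)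
    obtain ⟨l₀, -, hl₀⟩ := mem' 0 h0
    rw [pow_zero, mul_one] at he₀ hl₀
    have : c * (r ^ e₀ * r' ^ l₀) = c * 1 := by rw [← mul_assoc, he₀, hl₀, mul_one]
    rw [← he₀, Nat.eq_one_of_mul_eq_one_right (Nat.eq_of_mul_eq_mul_left hc this), mul_one]
  subst ha
  have hr' : r' = r := by
    obtain ⟨e₁, -, he₁⟩ := mem 1 (by omega)
    obtain ⟨l₁, -, hl₁⟩ := mem' 1 h1
    have hr'e : r' = r ^ e₁ := by simpa using (Nat.eq_of_mul_eq_mul_left hc he₁).symm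
    have hrl : r' ^ l₁ = r := by simpa using Nat.eq_of_mul_eq_mul_left hc hl₁
    have : r ^ 1 = r ^ (e₁ * l₁) := by rw [pow_mul, ← hr'e, hrl, pow_one]
    rw [hr'e, Nat.eq_one_of_mul_eq_one_right (Nat.pow_right_injective hr this).symm, pow_one]
  subst hr'
  exact image_injective (strictMono_mul_pow hc hr).injective h

lemma eq_of_isGeomProg_geomProg_mul {a b r k m n : ℕ} (ha : 0 < a) (hb : 0 < b) (hr : 2 ≤ r)
    (hm : 2 ≤ m) (hn : 2 ≤ n)
    (hcard : (geomProg a r m * geomProg b (r ^ k) n).card = m * n)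
    (hgeom : IsGeomProg (geomProg a r m * geomProg b (r ^ k) n)) : m = k := by
  obtain ⟨a', r', -, -, hP⟩ := hgeom
  rw [hcard, geomProg_mul_geomProg_pow] at hP
  have mem : ∀ i < m, i ∈ exponentSet k m n := fun i hi =>
    mem_image.2 ⟨(i, 0), mem_product.2 ⟨mem_range.2 hi, mem_range.2 (by omega)⟩, by simp⟩
  refine eq_of_exponentSet_eq_range (by omega) hn ?_
  exact eq_range_of_image_eq_geomProg (mul_pos ha hb) hr (mem 0 (by omega)) (mem 1 (by omega))
    (Nat.mul_le_mul (by omega : 1 ≤ m) hn) hP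

lemma card_geomProg_mul_geomProg_pow_self {a b r k : ℕ} (ha : 0 < a) (hb : 0 < b) (hr : 2 ≤ r)
    (hk : 0 < k) (n : ℕ) : (geomProg a r k * geomProg b (r ^ k) n).card = k * n := by
  rw [geomProg_mul_geomProg_pow, exponentSet_self hk]
  exact card_geomProg (mul_pos ha hb) hr _

theorem likeGeometric_strong_iff_general {V : Type*}
    (G : SimpleGraph V) (hconn : G.Connected) (hedge : ∃ u v, G.Adj u v)
    (X : Set V) (hbip : ∀ u v, G.Adj u v → (u ∈ X ↔ v ∉ X))
    (f : V → Finset ℕ) (rv av : V → ℕ) (k : ℕ)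
    (hr : ∀ v, 2 ≤ rv v) (ha : ∀ v, 0 < av v) (hcard : ∀ v, 2 ≤ (f v).card)
    (hgp : ∀ v, f v = (Finset.range (f v).card).image (fun i => av v * (rv v) ^ i))
    (hgeom : ∀ u v, G.Adj u v → IsGeomProg (f u * f v))
    (hk : 1 < k)
    (hchar : ∀ u v, G.Adj u v → u ∈ X → rv v = (rv u) ^ k) :
    (∀ u v, G.Adj u v → (f u * f v).card = (f u).card * (f v).card) ↔
      (∀ u ∈ X, (f u).card = k) := by
  have hprod : ∀ u v, G.Adj u v → u ∈ X →
      f u * f v = geomProg (av u) (rv u) (f u).card * geomProg (av v) (rv u ^ k) (f v).card := by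
    intro u v huv hu
    rw [← hchar u v huv hu]
    exact congrArg₂ (· * ·) (hgp u) (hgp v)
  constructor
  · intro hstrong u hu
    obtain ⟨_, _, hxy⟩ := hedge
    have : Nontrivial V := ⟨⟨_, _, hxy.ne⟩⟩
    obtain ⟨v, huv⟩ := hconn.preconnected.exists_adj_of_nontrivial u
    specialize hstrong u v huv
    specialize hgeom u v huv
    rw [hprod u v huv hu] at hstrong hgeom
    exact eq_of_isGeomProg_geomProg_mul (ha u) (ha v) (hr u) (hcard u) (hcard v) hstrong hgeom
  · intro hX
    have hstrongX : ∀ u v, G.Adj u v → u ∈ X → (f u * f v).card = (f u).card * (f v).card := by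
      intro u v huv hu
      rw [hprod u v huv hu, hX u hu]
      exact card_geomProg_mul_geomProg_pow_self (ha u) (ha v) (hr u) (by omega) _
    intro u v huv
    by_cases hu : u ∈ X
    · exact hstrongX u v huv hu
    · rw [mul_comm, Nat.mul_comm]
      exact hstrongX v u huv.symm (by simpa [hu] using hbip u v huv)

/-- Let `G` be a finite connected bipartite simple graph with
bipartition `(X, Xᶜ)` and at least one edge, and let `f` be a like-geometric product
set-labeling of `G` with common characteristic index `k` such that for every edge `uv`
with `u ∈ X` one has `rv v = (rv u)^k` (so `X` is the side of smaller common ratios).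
Then `f` is strong (`|f u ∗ f v| = |f u|·|f v|` for every edge `uv`) iff `|f u| = k` for
every `u ∈ X`. -/
theorem likeGeometric_strong_iff {V : Type*} [Fintype V]
    (G : SimpleGraph V) (hconn : G.Connected) (hedge : ∃ u v, G.Adj u v)
    (X : Set V) (hbip : ∀ u v, G.Adj u v → (u ∈ X ↔ v ∉ X))
    (f : V → Finset ℕ) (rv av : V → ℕ) (k : ℕ)
    (hinj : Function.Injective f)
    (hr : ∀ v, 2 ≤ rv v) (ha : ∀ v, 0 < av v) (hcard : ∀ v, 2 ≤ (f v).card)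
    (hgp : ∀ v, f v = (Finset.range (f v).card).image (fun i => av v * (rv v) ^ i))
    (hgeom : ∀ u v, G.Adj u v → IsGeomProg (f u * f v))
    (hk : 1 < k)
    (hchar : ∀ u v, G.Adj u v → u ∈ X → rv v = (rv u) ^ k) :
    (∀ u v, G.Adj u v → (f u * f v).card = (f u).card * (f v).card) ↔
      (∀ u ∈ X, (f u).card = k) :=
  likeGeometric_strong_iff_general G hconn hedge X hbip f rv av k hr ha hcard hgp hgeom hk hchar
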